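/- arXiv:1802.00501 — 3 statements merged into one kernel-verified Lean document; each statement's English description precedes it below -/
import Mathlib

section
/- Let W : ℝ → ℝ be continuous with W(x) → -∞ as |x| → ∞ and sup W < 0. Then the Hilbert space V = H¹(ℝ) ∩ L²_{-W}(ℝ), with norm ‖v‖_V² = ∫ |v'|² + ∫ (-W) v², embeds compactly into L²(ℝ): every bounded sequence in V has a subsequence converging in L²(ℝ). -/
/-! The Hölder bound `|v y - v x| ≤ |y - x| ^ (1/2) ‖v'‖₂` makes a bounded sequence in `V`
uniformly bounded and equicontinuous, so a diagonal argument over a countable dense set yields a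
pointwise convergent subsequence. Since `-W → ∞` at infinity, the `L²`-mass of `v` outside a
compact set is at most `‖v‖_V² / inf (-W)` there, uniformly small; with the uniform bound this
gives uniform integrability and tightness, and Vitali's convergence theorem upgrades pointwise
convergence to convergence in `L²`. -/

open MeasureTheory Filter Topology

open scoped ENNReal NNReal

section Lp

variable {α ι : Type*} [MeasurableSpace α] {μ : Measure α}

theorem MeasureTheory.MemLp.eLpNorm_two_eq_ofReal_sqrt_integral_sq {f : α → ℝ}
    (hf : MemLp f 2 μ) : eLpNorm f 2 μ = ENNReal.ofReal √(∫ x, f x ^ 2 ∂μ) := by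
  rw [hf.eLpNorm_eq_integral_rpow_norm two_ne_zero ENNReal.ofNat_ne_top, Real.sqrt_eq_rpow]
  simp [Real.norm_eq_abs]

theorem eLpNorm_indicator_le_of_le_weight {s : Set α} {u w : α → ℝ} {m : ℝ} (hm : 0 < m)
    (hw0 : ∀ x, 0 ≤ w x) (hws : ∀ x ∈ s, m ≤ w x)
    (hwu : Integrable (fun x => w x * u x ^ 2) μ) :
    eLpNorm (s.indicator u) 2 μ ≤ ENNReal.ofReal √((∫ x, w x * u x ^ 2 ∂μ) / m) := by
  set h := fun x => w x * u x ^ 2 / m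
  have h0 : ∀ x, 0 ≤ h x := fun x => div_nonneg (mul_nonneg (hw0 x) (sq_nonneg _)) hm.le
  have hsqrt : MemLp (fun x => √(h x)) 2 μ := by
    refine (memLp_two_iff_integrable_sq ?_).2 ?_
    · exact (hwu.div_const m).aestronglyMeasurable.aemeasurable.sqrt.aestronglyMeasurable
    · simpa only [Real.sq_sqrt (h0 _)] using hwu.div_const m
  have hpt : ∀ x, ‖s.indicator u x‖ ≤ √(h x) := by
    intro x
    by_cases hx : x ∈ s
    · rw [Set.indicator_of_mem hx, Real.norm_eq_abs, ← Real.sqrt_sq_eq_abs]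
      refine Real.sqrt_le_sqrt ((le_div_iff₀ hm).2 ?_)
      nlinarith [hws x hx, sq_nonneg (u x)]
    · simp [Set.indicator_of_notMem hx]
  calc eLpNorm (s.indicator u) 2 μ ≤ eLpNorm (fun x => √(h x)) 2 μ := eLpNorm_mono_real hpt
    _ = ENNReal.ofReal √((∫ x, w x * u x ^ 2 ∂μ) / m) := by
      rw [hsqrt.eLpNorm_two_eq_ofReal_sqrt_integral_sq, ← integral_div]
      simp only [Real.sq_sqrt (h0 _), h]

theorem unifTight_of_integral_weight_mul_sq_le [TopologicalSpace α]
    [IsFiniteMeasureOnCompacts μ] {u : ι → α → ℝ} {w : α → ℝ} (hw : Tendsto w (cocompact α) atTop)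
    (hw0 : ∀ x, 0 ≤ w x) (hwu : ∀ i, Integrable (fun x => w x * u i x ^ 2) μ) {B : ℝ}
    (hB : ∀ i, ∫ x, w x * u i x ^ 2 ∂μ ≤ B) : UnifTight u 2 μ := by
  intro ε hε
  set m := (|B| + 1) / (ε : ℝ) ^ 2
  have hm : 0 < m := by positivity
  obtain ⟨K, hK, hKw⟩ := mem_cocompact.1 (hw.eventually_ge_atTop m)
  refine ⟨K, hK.measure_lt_top.ne, fun i => ?_⟩
  calc eLpNorm (Kᶜ.indicator (u i)) 2 μ ≤ ENNReal.ofReal √((∫ x, w x * u i x ^ 2 ∂μ) / m) :=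
        eLpNorm_indicator_le_of_le_weight hm hw0 (fun x hx => hKw hx) (hwu i)
    _ ≤ ENNReal.ofReal ε := by
        gcongr
        refine Real.sqrt_le_iff.2 ⟨ε.2, (div_le_iff₀ hm).2 ?_⟩
        have : (ε : ℝ) ^ 2 * m = |B| + 1 := mul_div_cancel₀ _ (by positivity)
        linarith [hB i, le_abs_self B]
    _ = ε := ENNReal.ofReal_coe_nnreal

theorem unifIntegrable_of_forall_norm_le {E : Type*} [NormedAddCommGroup E] {p : ℝ≥0∞}
    (hp : 1 ≤ p) (hp' : p ≠ ∞) {f : ι → α → E} (hf : ∀ i, AEStronglyMeasurable (f i) μ) {C : ℝ}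
    (hC : ∀ i x, ‖f i x‖ ≤ C) : UnifIntegrable f p μ := by
  refine unifIntegrable_of hp hp' hf fun ε _ => ⟨C.toNNReal + 1, fun i => ?_⟩
  have hempty : {x | C.toNNReal + 1 ≤ ‖f i x‖₊} = ∅ := by
    refine Set.eq_empty_of_forall_notMem fun x hx => ?_
    have : C.toNNReal + 1 ≤ ‖f i x‖ := by exact_mod_cast hx
    linarith [Real.le_coe_toNNReal C, hC i x]
  simp [hempty]

end Lp

section Sobolev

variable {f : ℝ → ℝ}

theorem abs_sub_le_sqrt_mul_sqrt_integral_deriv_sq (hf : Differentiable ℝ f)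
    (hf' : Integrable (fun t => deriv f t ^ 2)) (x y : ℝ) :
    |f y - f x| ≤ √|y - x| * √(∫ t, deriv f t ^ 2) := by
  wlog hxy : x ≤ y generalizing x y
  · simpa only [abs_sub_comm] using this y x (le_of_not_ge hxy)
  have hmeas : AEStronglyMeasurable (deriv f) := (measurable_deriv f).aestronglyMeasurable
  have hL2 : MemLp (deriv f) 2 := (memLp_two_iff_integrable_sq hmeas).2 hf'
  have hint : IntervalIntegrable (deriv f) volume x y :=
    ((hL2.locallyIntegrable one_le_two).integrableOn_isCompact isCompact_uIcc).intervalIntegrable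
  have : IsFiniteMeasure (volume.restrict (Set.Ioc x y)) := ⟨by simp⟩
  have holder := integral_mul_le_Lp_mul_Lq_of_nonneg Real.HolderConjugate.two_two
    (Eventually.of_forall fun _ => zero_le_one) (Eventually.of_forall fun t => abs_nonneg _)
    (by simpa using memLp_const (μ := volume.restrict (Set.Ioc x y)) (1 : ℝ))
    (by rw [ENNReal.ofReal_ofNat]; exact hL2.abs.restrict _)
  calc |f y - f x| = |∫ t in x..y, deriv f t| := by
        rw [intervalIntegral.integral_deriv_eq_sub (fun t _ => hf t) hint]
    _ ≤ ∫ t in Set.Ioc x y, 1 * |deriv f t| := by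
        simpa [intervalIntegral.integral_of_le hxy] using abs_integral_le_integral_abs
    _ ≤ √|y - x| * √(∫ t in Set.Ioc x y, deriv f t ^ 2) := by
        simpa [Real.sqrt_eq_rpow, hxy, abs_of_nonneg (sub_nonneg.2 hxy)] using holder
    _ ≤ √|y - x| * √(∫ t, deriv f t ^ 2) := by
        gcongr ?_ * √?_
        exact setIntegral_le_integral hf' (Eventually.of_forall fun t => sq_nonneg _)

theorem abs_le_sqrt_integral_sq_add_sqrt_integral_deriv_sq (hf : Differentiable ℝ f)
    (hf' : Integrable (fun t => deriv f t ^ 2)) (hf2 : Integrable (fun t => f t ^ 2)) (x : ℝ) :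
    |f x| ≤ √(∫ t, f t ^ 2) + √(∫ t, deriv f t ^ 2) := by
  obtain ⟨y, hy, hfy⟩ := exists_le_setAverage (s := Set.Ioc (x - 1) x) (by simp) (by simp)
    hf2.integrableOn
  have hyx : |x - y| ≤ 1 := by
    rw [abs_of_nonneg (by linarith [hy.2])]
    linarith [hy.1]
  have hfy' : |f y| ≤ √(∫ t, f t ^ 2) := by
    rw [← Real.sqrt_sq_eq_abs]
    refine Real.sqrt_le_sqrt (hfy.trans ?_)
    rw [setAverage_eq, Real.volume_real_Ioc_of_le (by linarith), smul_eq_mul]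
    simpa using setIntegral_le_integral hf2 (Eventually.of_forall fun t => sq_nonneg (f t))
  calc |f x| ≤ |f y| + |f x - f y| := by linarith [abs_sub_abs_le_abs_sub (f x) (f y)]
    _ ≤ √(∫ t, f t ^ 2) + √|x - y| * √(∫ t, deriv f t ^ 2) := by
        gcongr
        exact abs_sub_le_sqrt_mul_sqrt_integral_deriv_sq hf hf' y x
    _ ≤ √(∫ t, f t ^ 2) + √(∫ t, deriv f t ^ 2) := by
        gcongr
        exact mul_le_of_le_one_left (Real.sqrt_nonneg _) (Real.sqrt_le_one.2 hyx)

end Sobolev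

theorem uniformEquicontinuous_of_integral_deriv_sq_le {ι : Type*} {u : ι → ℝ → ℝ}
    (hu : ∀ i, Differentiable ℝ (u i)) (hu' : ∀ i, Integrable (fun t => deriv (u i) t ^ 2))
    {A : ℝ} (hA : ∀ i, ∫ t, deriv (u i) t ^ 2 ≤ A) : UniformEquicontinuous u := by
  refine Metric.uniformEquicontinuous_of_continuity_modulus (fun r => √r * √A) ?_ u
    fun x y i => ?_
  · have : Continuous fun r : ℝ => √r * √A := by fun_prop
    simpa using this.tendsto 0
  · rw [Real.dist_eq, Real.dist_eq, abs_sub_comm]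
    calc |u i y - u i x| ≤ √|y - x| * √(∫ t, deriv (u i) t ^ 2) :=
          abs_sub_le_sqrt_mul_sqrt_integral_deriv_sq (hu i) (hu' i) x y
      _ ≤ √|x - y| * √A := by rw [abs_sub_comm]; gcongr; exact hA i

theorem Equicontinuous.cauchySeq_of_dense {X ι : Type*} [TopologicalSpace X]
    [SemilatticeSup ι] [Nonempty ι] {u : ι → X → ℝ} (hu : Equicontinuous u) {D : Set X}
    (hD : Dense D)
    (hDu : ∀ y ∈ D, CauchySeq fun i => u i y) (x : X) : CauchySeq fun i => u i x := by
  rw [Metric.cauchySeq_iff]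
  intro ε hε
  have hnear := Metric.equicontinuousAt_iff_right.1 (hu x) (ε / 3) (by positivity)
  obtain ⟨y, hyx, hyD⟩ := (hnear.and_frequently (mem_closure_iff_frequently.1 (hD x))).exists
  obtain ⟨N, hN⟩ := Metric.cauchySeq_iff.1 (hDu y hyD) (ε / 3) (by positivity)
  refine ⟨N, fun m hm n hn => ?_⟩
  calc dist (u m x) (u n x)
      ≤ dist (u m x) (u m y) + dist (u m y) (u n y) + dist (u n y) (u n x) :=
        dist_triangle4 _ _ _ _
    _ < ε / 3 + ε / 3 + ε / 3 := by
        gcongr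
        · exact hyx m
        · exact hN m hm n hn
        · rw [dist_comm]; exact hyx n
    _ = ε := by ring

theorem Equicontinuous.exists_strictMono_tendsto {X : Type*} [TopologicalSpace X]
    [TopologicalSpace.SeparableSpace X] {u : ℕ → X → ℝ} (hu : Equicontinuous u) {C : ℝ}
    (hC : ∀ n x, |u n x| ≤ C) :
    ∃ φ : ℕ → ℕ, StrictMono φ ∧
      ∃ g : X → ℝ, ∀ x, Tendsto (fun n => u (φ n) x) atTop (𝓝 (g x)) := by
  obtain ⟨D, hDc, hD⟩ := TopologicalSpace.exists_countable_dense X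
  have := hDc.to_subtype
  -- diagonal extraction, via sequential compactness of `D → [-C, C]`
  obtain ⟨L, φ, hφ, hL⟩ := CompactSpace.tendsto_subseq
    fun n (y : D) => (⟨u n y, abs_le.1 (hC n y)⟩ : Set.Icc (-C) C)
  have hDu (y : X) (hy : y ∈ D) : CauchySeq fun n => u (φ n) y :=
    ((continuous_subtype_val.tendsto _).comp (tendsto_pi_nhds.1 hL ⟨y, hy⟩)).cauchySeq
  have hcauchy := (hu.comp φ).cauchySeq_of_dense hD hDu
  choose g hg using fun x => cauchySeq_tendsto_of_complete (hcauchy x)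
  exact ⟨φ, hφ, g, hg⟩

theorem compact_embedding_V_L2_general
    (W : ℝ → ℝ) (hWneg : ∃ c > (0 : ℝ), ∀ x, W x ≤ -c)
    (hconf : Tendsto W (Filter.cocompact ℝ) atBot)
    (v : ℕ → ℝ → ℝ) (hdiff : ∀ n, Differentiable ℝ (v n))
    (hv2 : ∀ n, MemLp (v n) 2 volume)
    (hv'2 : ∀ n, Integrable (fun x => deriv (v n) x ^ 2))
    (hvW : ∀ n, Integrable (fun x => (-W x) * v n x ^ 2))
    (M : ℝ)
    (hbound : ∀ n, (∫ x, deriv (v n) x ^ 2) + (∫ x, (-W x) * v n x ^ 2) ≤ M) :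
    ∃ (φ : ℕ → ℕ), StrictMono φ ∧ ∃ g : ℝ → ℝ, MemLp g 2 volume ∧
      Tendsto (fun n => eLpNorm (fun x => v (φ n) x - g x) 2 volume) atTop (𝓝 0) := by
  obtain ⟨c, hc, hWc⟩ := hWneg
  have hw0 (x : ℝ) : 0 ≤ -W x := by linarith [hWc x, hc]
  have hA (n : ℕ) : ∫ x, deriv (v n) x ^ 2 ≤ M := by
    have : 0 ≤ ∫ x, -W x * v n x ^ 2 := integral_nonneg fun x => mul_nonneg (hw0 x) (sq_nonneg _)
    linarith [hbound n]
  have hB (n : ℕ) : ∫ x, -W x * v n x ^ 2 ≤ M := by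
    have : 0 ≤ ∫ x, deriv (v n) x ^ 2 := integral_nonneg fun x => sq_nonneg _
    linarith [hbound n]
  have hL2 (n : ℕ) : ∫ x, v n x ^ 2 ≤ M / c := by
    rw [le_div_iff₀ hc, ← integral_mul_const]
    refine (integral_mono ((hv2 n).integrable_sq.mul_const c) (hvW n) fun x => ?_).trans (hB n)
    nlinarith [hWc x, sq_nonneg (v n x)]
  have hsup (n : ℕ) (x : ℝ) : |v n x| ≤ √(M / c) + √M :=
    (abs_le_sqrt_integral_sq_add_sqrt_integral_deriv_sq (hdiff n) (hv'2 n)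
      (hv2 n).integrable_sq x).trans (by gcongr; exacts [hL2 n, hA n])
  obtain ⟨φ, hφ, g, hg⟩ := (uniformEquicontinuous_of_integral_deriv_sq_le hdiff hv'2 hA)
    |>.equicontinuous.exists_strictMono_tendsto hsup
  have hvL2 (n : ℕ) : eLpNorm (v n) 2 volume ≤ ENNReal.ofReal √(M / c) := by
    rw [(hv2 n).eLpNorm_two_eq_ofReal_sqrt_integral_sq]
    exact ENNReal.ofReal_le_ofReal (Real.sqrt_le_sqrt (hL2 n))
  have hg2 : MemLp g 2 volume :=
    ⟨aestronglyMeasurable_of_tendsto_ae atTop (fun n => (hv2 (φ n)).1) (ae_of_all _ hg),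
      (Lp.eLpNorm_le_of_ae_tendsto (Eventually.of_forall fun n => hvL2 (φ n))
        (fun n => (hv2 (φ n)).1) (ae_of_all _ hg)).trans_lt ENNReal.ofReal_lt_top⟩
  refine ⟨φ, hφ, g, hg2, tendsto_Lp_of_tendsto_ae one_le_two ENNReal.ofNat_ne_top
    (fun n => (hv2 (φ n)).1) hg2 ?_ ?_ (ae_of_all _ hg)⟩
  · exact unifIntegrable_of_forall_norm_le one_le_two ENNReal.ofNat_ne_top
      (fun n => (hv2 (φ n)).1) fun n => hsup (φ n)
  · exact unifTight_of_integral_weight_mul_sq_le (tendsto_neg_atBot_atTop.comp hconf) hw0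
      (fun n => hvW (φ n)) fun n => hB (φ n)

theorem compact_embedding_V_L2
    (W : ℝ → ℝ) (hW : Continuous W) (hWneg : ∃ c > (0 : ℝ), ∀ x, W x ≤ -c)
    (hconf : Tendsto W (Filter.cocompact ℝ) atBot)
    (v : ℕ → ℝ → ℝ) (hdiff : ∀ n, Differentiable ℝ (v n))
    (hv2 : ∀ n, MemLp (v n) 2 volume)
    (hv'2 : ∀ n, Integrable (fun x => deriv (v n) x ^ 2))
    (hvW : ∀ n, Integrable (fun x => (-W x) * v n x ^ 2))
    (M : ℝ)
    (hbound : ∀ n, (∫ x, deriv (v n) x ^ 2) + (∫ x, (-W x) * v n x ^ 2) ≤ M) :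
    ∃ (φ : ℕ → ℕ), StrictMono φ ∧ ∃ g : ℝ → ℝ, MemLp g 2 volume ∧
      Tendsto (fun n => eLpNorm (fun x => v (φ n) x - g x) 2 volume) atTop (𝓝 0) :=
  compact_embedding_V_L2_general W hWneg hconf v hdiff hv2 hv'2 hvW M hbound
end

section
/- Define W(x) = -(x^{10} - x^8 + x^6 - (43/8) x^4 + (105/64) x^2) and φ(x) = exp(-(3/16) x² + (1/8) x⁴ - (1/6) x⁶). Then -φ''(x) - W(x) φ(x) = (3/8) φ(x) for all x ∈ ℝ. -/
/-! For `φ = exp ∘ g` one has `φ'' = (g'' + g'²) φ`, so with the sextic exponent `g` the claim reduces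
to the polynomial identity `-(g'' + g'²) - W = 3/8`. -/

open Real

theorem deriv_deriv_exp_comp {g g' g'' : ℝ → ℝ} (hg : ∀ x, HasDerivAt g (g' x) x)
    (hg' : ∀ x, HasDerivAt g' (g'' x) x) (x : ℝ) :
    deriv (deriv fun y => exp (g y)) x = (g'' x + g' x ^ 2) * exp (g x) := by
  have hderiv : deriv (fun y => exp (g y)) = fun y => exp (g y) * g' y :=
    funext fun y => (hg y).exp.deriv
  rw [hderiv, ((hg x).exp.fun_mul (hg' x)).deriv]
  ring

theorem hasDerivAt_decic_exponent (x : ℝ) :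
    HasDerivAt (fun x : ℝ => -(3 / 16) * x ^ 2 + (1 / 8) * x ^ 4 - (1 / 6) * x ^ 6)
      (-(3 / 8) * x + (1 / 2) * x ^ 3 - x ^ 5) x :=
  ((((hasDerivAt_pow 2 x).const_mul (-(3 / 16))).add
    ((hasDerivAt_pow 4 x).const_mul (1 / 8))).sub
    ((hasDerivAt_pow 6 x).const_mul (1 / 6))).congr_deriv (by ring)

theorem hasDerivAt_decic_exponent_deriv (x : ℝ) :
    HasDerivAt (fun x : ℝ => -(3 / 8) * x + (1 / 2) * x ^ 3 - x ^ 5)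
      (-(3 / 8) + (3 / 2) * x ^ 2 - 5 * x ^ 4) x :=
  ((((hasDerivAt_id x).const_mul (-(3 / 8))).add
    ((hasDerivAt_pow 3 x).const_mul (1 / 2))).sub (hasDerivAt_pow 5 x)).congr_deriv (by ring)

theorem decic_potential_ground_state :
    let W : ℝ → ℝ := fun x =>
      -(x ^ 10 - x ^ 8 + x ^ 6 - (43 / 8) * x ^ 4 + (105 / 64) * x ^ 2)
    let φ : ℝ → ℝ := fun x =>
      Real.exp (-(3 / 16) * x ^ 2 + (1 / 8) * x ^ 4 - (1 / 6) * x ^ 6)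
    ∀ x : ℝ, -(deriv (deriv φ) x) - W x * φ x = (3 / 8) * φ x := by
  intro W φ x
  rw [deriv_deriv_exp_comp hasDerivAt_decic_exponent hasDerivAt_decic_exponent_deriv x]
  ring
end

section
/- Let B > 0 and C ≥ 0. Define W(x) = -( (B²/4)(sinh x - C/B)² - B cosh x ) and φ(x) = (e^{x/2} - (1/B)(C - √(B² + C²)) e^{-x/2}) · exp((C/2) x - (B/2) cosh x). Then -φ''(x) - W(x) φ(x) = λ φ(x) for all x ∈ ℝ, where λ = -(1/2)√(B² + C²) - 1/4. -/
/-!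
Write `φ = f * exp g` with `g x = C x / 2 - (B / 2) cosh x` and `f x = e^{x/2} - k e^{-x/2}`,
`k = (C - √(B² + C²)) / B`. Since `-W = g'² + 2 g''` and `f'' = f / 4`, the equation reduces to
`-f / 4 - 2 f' g' + g'' f = λ f`; in the basis `e^{± x/2}` its two coefficients vanish because
`B k = C - √(B² + C²)` and `k` is a root of `B k² - 2 C k - B`.
-/

open Real

theorem deriv_deriv_mul_exp {f f' f'' g g' g'' : ℝ → ℝ}
    (hf : ∀ x, HasDerivAt f (f' x) x) (hf' : ∀ x, HasDerivAt f' (f'' x) x)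
    (hg : ∀ x, HasDerivAt g (g' x) x) (hg' : ∀ x, HasDerivAt g' (g'' x) x) (x : ℝ) :
    deriv (deriv fun t => f t * exp (g t)) x =
      (f'' x + 2 * f' x * g' x + f x * (g'' x + g' x ^ 2)) * exp (g x) := by
  have hfirst : deriv (fun t => f t * exp (g t)) = fun t => (f' t + f t * g' t) * exp (g t) :=
    funext fun t => ((hf t).mul (hg t).exp).deriv.trans (by ring)
  have hsecond : HasDerivAt (fun t => (f' t + f t * g' t) * exp (g t))
      ((f'' x + (f' x * g' x + f x * g'' x)) * exp (g x) +
        (f' x + f x * g' x) * (exp (g x) * g' x)) x :=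
    ((hf' x).add ((hf x).mul (hg' x))).mul (hg x).exp
  rw [hfirst, hsecond.deriv]
  ring

theorem hasDerivAt_exp_half_sub_mul_exp_neg_half (k x : ℝ) :
    HasDerivAt (fun t => exp (t / 2) - k * exp (-t / 2))
      ((exp (x / 2) + k * exp (-x / 2)) / 2) x := by
  have h₁ := ((hasDerivAt_id' x).div_const 2).exp
  have h₂ := ((hasDerivAt_neg x).div_const 2).exp.const_mul k
  exact (h₁.sub h₂).congr_deriv (by ring)

theorem hasDerivAt_exp_half_add_mul_exp_neg_half (k x : ℝ) :
    HasDerivAt (fun t => exp (t / 2) + k * exp (-t / 2))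
      ((exp (x / 2) - k * exp (-x / 2)) / 2) x := by
  have h₁ := ((hasDerivAt_id' x).div_const 2).exp
  have h₂ := ((hasDerivAt_neg x).div_const 2).exp.const_mul k
  exact (h₁.add h₂).congr_deriv (by ring)

theorem cosh_eq_exp_half (x : ℝ) : cosh x = (exp (x / 2) ^ 2 + exp (-x / 2) ^ 2) / 2 := by
  rw [cosh_eq, ← exp_nat_mul, ← exp_nat_mul]; ring_nf

theorem sinh_eq_exp_half (x : ℝ) : sinh x = (exp (x / 2) ^ 2 - exp (-x / 2) ^ 2) / 2 := by
  rw [sinh_eq, ← exp_nat_mul, ← exp_nat_mul]; ring_nf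

theorem exp_half_mul_exp_neg_half (x : ℝ) : exp (x / 2) * exp (-x / 2) = 1 := by
  rw [← exp_add]; ring_nf; exact exp_zero

theorem hyperbolic_potential_eigenfunction_general (B C : ℝ) (hB : 0 < B) :
    let W : ℝ → ℝ := fun x =>
      -((B ^ 2 / 4) * (Real.sinh x - C / B) ^ 2 - B * Real.cosh x)
    let φ : ℝ → ℝ := fun x =>
      (Real.exp (x / 2) - (1 / B) * (C - Real.sqrt (B ^ 2 + C ^ 2)) * Real.exp (-x / 2)) *
        Real.exp ((C / 2) * x - (B / 2) * Real.cosh x)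
    ∀ x : ℝ, -(deriv (deriv φ) x) - W x * φ x =
      (-(1 / 2) * Real.sqrt (B ^ 2 + C ^ 2) - 1 / 4) * φ x := by
  intro W φ x
  simp only [W, φ]
  set s := √(B ^ 2 + C ^ 2)
  set k := 1 / B * (C - s)
  have hs : s ^ 2 = B ^ 2 + C ^ 2 := sq_sqrt (by positivity)
  have hk : B * k = C - s := by simp only [k]; field_simp
  have hk_root : B * k ^ 2 - 2 * C * k - B = 0 :=
    mul_left_cancel₀ hB.ne' (by linear_combination (B * k - C - s) * hk + hs)
  have hg (y : ℝ) : HasDerivAt (fun t => C / 2 * t - B / 2 * cosh t) (C / 2 - B / 2 * sinh y) y :=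
    ((hasDerivAt_id' y).const_mul _).sub ((hasDerivAt_cosh y).const_mul _) |>.congr_deriv (by ring)
  have hg' (y : ℝ) : HasDerivAt (fun t => C / 2 - B / 2 * sinh t) (-(B / 2 * cosh y)) y :=
    ((hasDerivAt_sinh y).const_mul _).const_sub _
  rw [deriv_deriv_mul_exp (hasDerivAt_exp_half_sub_mul_exp_neg_half k)
    (fun y => (hasDerivAt_exp_half_add_mul_exp_neg_half k y).div_const 2) hg hg' x]
  have hpot : B ^ 2 / 4 * (sinh x - C / B) ^ 2 = (B * sinh x - C) ^ 2 / 4 := by field_simp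
  rw [hpot]
  set E := exp (C / 2 * x - B / 2 * cosh x)
  rw [cosh_eq_exp_half, sinh_eq_exp_half]
  have hab := exp_half_mul_exp_neg_half x
  set a := exp (x / 2)
  set b := exp (-x / 2)
  clear_value k s
  linear_combination (B / 2 * (k * a - b) * E) * hab + ((a - k * b) / 2 * E) * hk
    + (b / 2 * E) * hk_root

theorem hyperbolic_potential_eigenfunction (B C : ℝ) (hB : 0 < B) (hC : 0 ≤ C) :
    let W : ℝ → ℝ := fun x =>
      -((B ^ 2 / 4) * (Real.sinh x - C / B) ^ 2 - B * Real.cosh x)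
    let φ : ℝ → ℝ := fun x =>
      (Real.exp (x / 2) - (1 / B) * (C - Real.sqrt (B ^ 2 + C ^ 2)) * Real.exp (-x / 2)) *
        Real.exp ((C / 2) * x - (B / 2) * Real.cosh x)
    ∀ x : ℝ, -(deriv (deriv φ) x) - W x * φ x =
      (-(1 / 2) * Real.sqrt (B ^ 2 + C ^ 2) - 1 / 4) * φ x :=
  hyperbolic_potential_eigenfunction_general B C hB
end
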